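/- Let ϑ : [0,D] → ℝ be C¹ with ϑ' > 0 nonincreasing, satisfying d/dt[a(ϑ'(t))] + ((n−1)/R₀) a(ϑ'(t)) + h̄ = 0. Let x₁ ∈ ℝⁿ and define v(x) = ϑ(|x−x₁| − R₀) on the region {x : R₀ < |x−x₁| < R₀ + D}. Then the A-Laplacian of v satisfies Δ_A v(x) = a'(ϑ'(d(x))) ϑ''(d(x)) + ((n−1)/|x−x₁|) a(ϑ'(d(x))), where d(x) = |x−x₁| − R₀, and consequently Δ_A v(x) + h̄ ≤ 0 whenever |x−x₁| > R₀. -/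

import Mathlib

/-! Where `ϑ' > 0`, the flux `a(|∇v|) ∇v / |∇v|` is the radial field `g(r) (y - x₁) / r` with
`r = |y - x₁|` and `g(s) = a(ϑ'(s - R₀))`, and the divergence of such a field is
`g'(r) + (n - 1) g(r) / r`. Subtracting the ODE, `Δ_A v + h̄ = (n - 1)(1/r - 1/R₀) g(r) ≤ 0`,
because `g > 0` (as `a` is increasing with `a 0 = 0`) and `r > R₀`. -/

open Real Set Finset Topology

section RadialCalculus

variable {F : Type*} [NormedAddCommGroup F] [InnerProductSpace ℝ F]

theorem hasFDerivAt_norm {x : F} (hx : x ≠ 0) :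
    HasFDerivAt (fun y : F => ‖y‖) (‖x‖⁻¹ • innerSL ℝ x) x := by
  have hpos : 0 < ‖x‖ := norm_pos_iff.2 hx
  have hsq := (Real.hasDerivAt_sqrt (by positivity : ‖x‖ ^ 2 ≠ 0)).comp_hasFDerivAt x
    (hasStrictFDerivAt_norm_sq x).hasFDerivAt
  simp only [Function.comp_def, Real.sqrt_sq (norm_nonneg _)] at hsq
  refine hsq.congr_fderiv ?_
  ext w
  simp only [smul_apply, innerSL_apply_apply, smul_eq_mul, nsmul_eq_mul, Nat.cast_ofNat]
  field_simp

theorem hasFDerivAt_norm_sub {c x : F} (hx : x ≠ c) :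
    HasFDerivAt (fun y : F => ‖y - c‖) (‖x - c‖⁻¹ • innerSL ℝ (x - c)) x := by
  have h := (hasFDerivAt_norm (sub_ne_zero.2 hx)).comp x ((hasFDerivAt_id x).sub_const c)
  exact h.congr_fderiv (by ext; simp)

theorem HasDerivAt.hasFDerivAt_comp_norm_sub {f : ℝ → ℝ} {f' : ℝ} {c x : F} (hx : x ≠ c)
    (hf : HasDerivAt f f' ‖x - c‖) :
    HasFDerivAt (fun y => f ‖y - c‖) ((f' / ‖x - c‖) • innerSL ℝ (x - c)) x := by
  refine (hf.comp_hasFDerivAt x (hasFDerivAt_norm_sub hx)).congr_fderiv ?_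
  rw [smul_smul, div_eq_mul_inv]

theorem HasDerivAt.hasGradientAt_comp_norm_sub [CompleteSpace F] {f : ℝ → ℝ} {f' : ℝ}
    {c x : F} (hx : x ≠ c) (hf : HasDerivAt f f' ‖x - c‖) :
    HasGradientAt (fun y => f ‖y - c‖) ((f' / ‖x - c‖) • (x - c)) x := by
  rw [hasGradientAt_iff_hasFDerivAt]
  refine (hf.hasFDerivAt_comp_norm_sub hx).congr_fderiv ?_
  ext w
  simp

theorem norm_gradient_comp_norm_sub [CompleteSpace F] {f : ℝ → ℝ} {f' : ℝ} {c x : F}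
    (hx : x ≠ c) (hf : HasDerivAt f f' ‖x - c‖) :
    ‖gradient (fun y => f ‖y - c‖) x‖ = |f'| := by
  have hr : 0 < ‖x - c‖ := norm_pos_iff.2 (sub_ne_zero.2 hx)
  rw [(hf.hasGradientAt_comp_norm_sub hx).gradient, norm_smul, norm_div, norm_norm,
    Real.norm_eq_abs]
  field_simp

theorem flux_comp_norm_sub_apply [CompleteSpace F] (a : ℝ → ℝ) {f : ℝ → ℝ} {f' : ℝ} {c x : F}
    (hx : x ≠ c) (hf : HasDerivAt f f' ‖x - c‖) (hf' : 0 < f') (w : F) :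
    a ‖gradient (fun y => f ‖y - c‖) x‖ / ‖gradient (fun y => f ‖y - c‖) x‖ *
        fderiv ℝ (fun y => f ‖y - c‖) x w = a f' / ‖x - c‖ * inner ℝ (x - c) w := by
  rw [norm_gradient_comp_norm_sub hx hf, abs_of_pos hf', (hf.hasFDerivAt_comp_norm_sub hx).fderiv]
  simp only [smul_apply, innerSL_apply_apply, smul_eq_mul]
  field_simp

theorem flux_comp_norm_sub_eventuallyEq [CompleteSpace F] (a : ℝ → ℝ) {f f' : ℝ → ℝ} {U : Set ℝ}
    (hU : IsOpen U) (hU_pos : ∀ s ∈ U, 0 < s) (hf : ∀ s ∈ U, HasDerivAt f (f' s) s)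
    (hf'_pos : ∀ s ∈ U, 0 < f' s) {c x : F} (hx : ‖x - c‖ ∈ U) (w : F) :
    (fun y => a ‖gradient (fun z => f ‖z - c‖) y‖ / ‖gradient (fun z => f ‖z - c‖) y‖ *
        fderiv ℝ (fun z => f ‖z - c‖) y w) =ᶠ[𝓝 x]
      fun y => a (f' ‖y - c‖) / ‖y - c‖ * inner ℝ (y - c) w := by
  have hnhds : {y : F | ‖y - c‖ ∈ U} ∈ 𝓝 x :=
    (hU.preimage (continuous_id.sub continuous_const).norm).mem_nhds hx
  filter_upwards [hnhds] with y hy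
  have hyc : y ≠ c := sub_ne_zero.1 (norm_pos_iff.1 (hU_pos _ hy))
  exact flux_comp_norm_sub_apply a hyc (hf _ hy) (hf'_pos _ hy) w

end RadialCalculus

section Divergence

variable {n : ℕ}

theorem sum_fderiv_mul_sub_apply_single {φ : EuclideanSpace ℝ (Fin n) → ℝ}
    {φ' : EuclideanSpace ℝ (Fin n) →L[ℝ] ℝ} {c x : EuclideanSpace ℝ (Fin n)}
    (hφ : HasFDerivAt φ φ' x) :
    ∑ i, fderiv ℝ (fun y => φ y * (y i - c i)) x (EuclideanSpace.single i 1) =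
      φ' (x - c) + n * φ x := by
  have hcoord : ∀ i, HasFDerivAt (fun y : EuclideanSpace ℝ (Fin n) => y i - c i)
      (EuclideanSpace.proj i : EuclideanSpace ℝ (Fin n) →L[ℝ] ℝ) x := fun i =>
    (EuclideanSpace.proj i : EuclideanSpace ℝ (Fin n) →L[ℝ] ℝ).hasFDerivAt.sub_const (c i)
  have hexpand : φ' (x - c) = ∑ i, φ' (EuclideanSpace.single i 1) * (x i - c i) := by
    conv_lhs => rw [← (EuclideanSpace.basisFun (Fin n) ℝ).sum_repr (x - c)]
    simp [map_sum, mul_comm]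
  have hterm : ∀ i, fderiv ℝ (fun y => φ y * (y i - c i)) x (EuclideanSpace.single i 1) =
      φ' (EuclideanSpace.single i 1) * (x i - c i) + φ x := by
    intro i
    rw [(hφ.fun_mul (hcoord i)).fderiv]
    simp [add_comm, mul_comm]
  simp [hterm, Finset.sum_add_distrib, hexpand, mul_comm]

theorem sum_fderiv_radial_field {g : ℝ → ℝ} {g' : ℝ} {c x : EuclideanSpace ℝ (Fin n)}
    (hx : x ≠ c) (hg : HasDerivAt g g' ‖x - c‖) :
    ∑ i, fderiv ℝ (fun y => g ‖y - c‖ / ‖y - c‖ * (y i - c i)) x (EuclideanSpace.single i 1) =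
      g' + ((n : ℝ) - 1) / ‖x - c‖ * g ‖x - c‖ := by
  have hr : ‖x - c‖ ≠ 0 := norm_ne_zero_iff.2 (sub_ne_zero.2 hx)
  have hφ : HasFDerivAt (fun y => g ‖y - c‖ / ‖y - c‖) _ x :=
    (hg.div (hasDerivAt_id' _) hr).hasFDerivAt_comp_norm_sub (f := fun s => g s / s) hx
  rw [sum_fderiv_mul_sub_apply_single hφ]
  simp only [smul_apply, innerSL_apply_apply, smul_eq_mul, real_inner_self_eq_norm_sq]
  field_simp
  ring

end Divergence

theorem ContDiffOn.hasDerivAt_deriv_of_isOpen {f : ℝ → ℝ} {s : Set ℝ} (hf : ContDiffOn ℝ 2 f s)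
    (hs : IsOpen s) {t : ℝ} (ht : t ∈ s) : HasDerivAt (deriv f) (deriv (deriv f) t) t :=
  (((hf.deriv_of_isOpen hs (by norm_num : (1 : WithTop ℕ∞) + 1 ≤ 2)).differentiableOn
    one_ne_zero t ht).differentiableAt (hs.mem_nhds ht)).hasDerivAt

theorem radial_supersolution_general
    (n : ℕ) (hn : 2 ≤ n)
    (a : ℝ → ℝ) (haC1 : ContDiff ℝ 1 a) (ha_mono : StrictMonoOn a (Ici 0))
    (ha0 : a 0 = 0)
    (D R₀ h' : ℝ) (hR₀ : 0 < R₀)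
    (ϑ : ℝ → ℝ)
    (hϑC2 : ContDiffOn ℝ 2 ϑ (Ioo 0 D))
    (hϑ'pos : ∀ t ∈ Icc (0:ℝ) D, 0 < deriv ϑ t)
    (hode : ∀ t ∈ Ioo (0:ℝ) D,
      deriv (fun s => a (deriv ϑ s)) t + (((n : ℝ) - 1) / R₀) * a (deriv ϑ t) + h' = 0)
    (x₁ : EuclideanSpace ℝ (Fin n)) :
    let v : EuclideanSpace ℝ (Fin n) → ℝ := fun y => ϑ (‖y - x₁‖ - R₀)
    let E : Fin n → EuclideanSpace ℝ (Fin n) := fun i => EuclideanSpace.single i 1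
    let ΔA : EuclideanSpace ℝ (Fin n) → ℝ := fun x =>
      ∑ i : Fin n, fderiv ℝ
        (fun y => (a ‖gradient v y‖ / ‖gradient v y‖) * fderiv ℝ v y (E i)) x (E i)
    ∀ x : EuclideanSpace ℝ (Fin n), R₀ < ‖x - x₁‖ → ‖x - x₁‖ < R₀ + D →
      ΔA x = deriv a (deriv ϑ (‖x - x₁‖ - R₀)) * deriv (deriv ϑ) (‖x - x₁‖ - R₀) +
          (((n : ℝ) - 1) / ‖x - x₁‖) * a (deriv ϑ (‖x - x₁‖ - R₀)) ∧
      ΔA x + h' ≤ 0 := by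
  intro v E ΔA x hx₁ hx₂
  have hx : x ≠ x₁ := sub_ne_zero.1 (norm_pos_iff.1 (hR₀.trans hx₁))
  have hd : ‖x - x₁‖ - R₀ ∈ Ioo 0 D := ⟨by linarith, by linarith⟩
  have hshift : ∀ s ∈ Ioo R₀ (R₀ + D), s - R₀ ∈ Ioo 0 D := fun s hs =>
    ⟨by linarith [hs.1], by linarith [hs.2]⟩
  have hϑ : ∀ s ∈ Ioo R₀ (R₀ + D), HasDerivAt (fun s => ϑ (s - R₀)) (deriv ϑ (s - R₀)) s :=
    fun s hs => (((hϑC2.differentiableOn two_ne_zero _ (hshift s hs)).differentiableAt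
      (isOpen_Ioo.mem_nhds (hshift s hs))).hasDerivAt).comp_sub_const _ _
  have hflux : ∀ i, (fun y => a ‖gradient v y‖ / ‖gradient v y‖ * fderiv ℝ v y (E i)) =ᶠ[𝓝 x]
      fun y => a (deriv ϑ (‖y - x₁‖ - R₀)) / ‖y - x₁‖ * (y i - x₁ i) := fun i => by
    simpa [E, EuclideanSpace.inner_single_right] using
      flux_comp_norm_sub_eventuallyEq a isOpen_Ioo (fun s hs => hR₀.trans hs.1) hϑ
        (fun s hs => hϑ'pos _ (Ioo_subset_Icc_self (hshift s hs))) ⟨hx₁, hx₂⟩ (E i)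
  have hA : HasDerivAt (fun s => a (deriv ϑ s))
      (deriv a (deriv ϑ (‖x - x₁‖ - R₀)) * deriv (deriv ϑ) (‖x - x₁‖ - R₀)) (‖x - x₁‖ - R₀) :=
    ((haC1.differentiable one_ne_zero _).hasDerivAt).comp _
      (hϑC2.hasDerivAt_deriv_of_isOpen isOpen_Ioo hd)
  have hΔ : ΔA x = deriv a (deriv ϑ (‖x - x₁‖ - R₀)) * deriv (deriv ϑ) (‖x - x₁‖ - R₀) +
      (((n : ℝ) - 1) / ‖x - x₁‖) * a (deriv ϑ (‖x - x₁‖ - R₀)) := by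
    rw [← sum_fderiv_radial_field (g := fun s => a (deriv ϑ (s - R₀))) hx (hA.comp_sub_const _ _)]
    exact sum_congr rfl fun i _ => by rw [(hflux i).fderiv_eq]
  refine ⟨hΔ, ?_⟩
  have hpos : 0 < a (deriv ϑ (‖x - x₁‖ - R₀)) := by
    have h := hϑ'pos _ (Ioo_subset_Icc_self hd)
    simpa [ha0] using ha_mono (mem_Ici.2 le_rfl) (mem_Ici.2 h.le) h
  have hcurv : ((n : ℝ) - 1) / ‖x - x₁‖ ≤ ((n : ℝ) - 1) / R₀ :=
    div_le_div_of_nonneg_left (by linarith [show (2 : ℝ) ≤ n by exact_mod_cast hn]) hR₀ hx₁.le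
  have hode_x := hode _ hd
  rw [hA.deriv] at hode_x
  rw [hΔ]
  nlinarith [mul_le_mul_of_nonneg_right hcurv hpos.le]

/-- For the radial function `v(x) = ϑ(|x-x₁| - R₀)` built from a solution `ϑ`
of the barrier ODE, the A-Laplacian satisfies
`Δ_A v = a'(ϑ'(d)) ϑ''(d) + ((n-1)/|x-x₁|) a(ϑ'(d))` and `Δ_A v + h̄ ≤ 0`
on the region `R₀ < |x-x₁| < R₀ + D`. -/
theorem radial_supersolution
    (n : ℕ) (hn : 2 ≤ n)
    (a : ℝ → ℝ) (haC1 : ContDiff ℝ 1 a) (ha_mono : StrictMonoOn a (Ici 0))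
    (ha0 : a 0 = 0)
    (D R₀ h' : ℝ) (hD : 0 < D) (hR₀ : 0 < R₀) (hh : 0 < h')
    (ϑ : ℝ → ℝ)
    (hϑC1 : ContDiffOn ℝ 1 ϑ (Icc 0 D))
    (hϑC2 : ContDiffOn ℝ 2 ϑ (Ioo 0 D))
    (hϑ'pos : ∀ t ∈ Icc (0:ℝ) D, 0 < deriv ϑ t)
    (hϑ'anti : AntitoneOn (deriv ϑ) (Icc 0 D))
    (hϑ''nonpos : ∀ t ∈ Ioo (0:ℝ) D, deriv (deriv ϑ) t ≤ 0)
    (hode : ∀ t ∈ Ioo (0:ℝ) D,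
      deriv (fun s => a (deriv ϑ s)) t + (((n : ℝ) - 1) / R₀) * a (deriv ϑ t) + h' = 0)
    (x₁ : EuclideanSpace ℝ (Fin n)) :
    let v : EuclideanSpace ℝ (Fin n) → ℝ := fun y => ϑ (‖y - x₁‖ - R₀)
    let E : Fin n → EuclideanSpace ℝ (Fin n) := fun i => EuclideanSpace.single i 1
    let ΔA : EuclideanSpace ℝ (Fin n) → ℝ := fun x =>
      ∑ i : Fin n, fderiv ℝ
        (fun y => (a ‖gradient v y‖ / ‖gradient v y‖) * fderiv ℝ v y (E i)) x (E i)
    ∀ x : EuclideanSpace ℝ (Fin n), R₀ < ‖x - x₁‖ → ‖x - x₁‖ < R₀ + D →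
      ΔA x = deriv a (deriv ϑ (‖x - x₁‖ - R₀)) * deriv (deriv ϑ) (‖x - x₁‖ - R₀) +
          (((n : ℝ) - 1) / ‖x - x₁‖) * a (deriv ϑ (‖x - x₁‖ - R₀)) ∧
      ΔA x + h' ≤ 0 :=
  radial_supersolution_general n hn a haC1 ha_mono ha0 D R₀ h' hR₀ ϑ hϑC2 hϑ'pos hode x₁
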